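/- Let ζ ∈ ℂ, let (Q,R) be a smooth solution of the matrix NLS system, and let (Ψ₁,Ψ₂), with Ψ₁ l×l-valued and invertible at every point and Ψ₂ m×l-valued, satisfy the Lax pair Ψ_x = U(ζ)Ψ, Ψ_t = V(ζ)Ψ. Then the pair (Q, R̃) with R̃ := Ψ₂ Ψ₁⁻¹ satisfies the matrix derivative NLS system with parameter ζ: i Q_t + Q_xx + 4iζ Q R̃ Q − 2 Q R̃_x Q − 2 Q R̃ Q R̃ Q = 0 and i R̃_t − R̃_xx − 4iζ R̃ Q R̃ − 2 R̃ Q_x R̃ + 2 R̃ Q R̃ Q R̃ = 0. -/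

import Mathlib

open Matrix Complex

noncomputable section

/-- Entrywise partial derivative in the first (space) variable. -/
def pdx {n p : Type*} (Q : ℝ → ℝ → Matrix n p ℂ) : ℝ → ℝ → Matrix n p ℂ :=
  fun x t => Matrix.of fun i j => deriv (fun x' => Q x' t i j) x

/-- Entrywise partial derivative in the second (time) variable. -/
def pdt {n p : Type*} (Q : ℝ → ℝ → Matrix n p ℂ) : ℝ → ℝ → Matrix n p ℂ :=
  fun x t => Matrix.of fun i j => deriv (fun t' => Q x t' i j) t

/-- Entrywise joint smoothness in (x,t). -/
def SmoothM {n p : Type*} (Q : ℝ → ℝ → Matrix n p ℂ) : Prop :=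
  ∀ i j, ContDiff ℝ (⊤ : ℕ∞) (fun q : ℝ × ℝ => Q q.1 q.2 i j)

/-- The matrix NLS system `i Q_t + Q_xx - 2QRQ = 0`, `i R_t - R_xx + 2RQR = 0`. -/
def MatrixNLS {l m : Type*} [Fintype l] [Fintype m]
    (Q : ℝ → ℝ → Matrix l m ℂ) (R : ℝ → ℝ → Matrix m l ℂ) : Prop :=
  (∀ x t : ℝ, Complex.I • pdt Q x t + pdx (pdx Q) x t
      - (2 : ℂ) • (Q x t * R x t * Q x t) = 0) ∧
  (∀ x t : ℝ, Complex.I • pdt R x t - pdx (pdx R) x t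
      + (2 : ℂ) • (R x t * Q x t * R x t) = 0)

/-- The spatial Lax matrix `U(ζ)`. -/
def LaxU {l m : Type*} [DecidableEq l] [DecidableEq m] (ζ : ℂ)
    (Q : ℝ → ℝ → Matrix l m ℂ) (R : ℝ → ℝ → Matrix m l ℂ) :
    ℝ → ℝ → Matrix (l ⊕ m) (l ⊕ m) ℂ :=
  fun x t => Matrix.fromBlocks ((-(Complex.I * ζ)) • 1) (Q x t) (R x t) ((Complex.I * ζ) • 1)

/-- The temporal Lax matrix `V(ζ)`. -/
def LaxV {l m : Type*} [Fintype l] [Fintype m] [DecidableEq l] [DecidableEq m] (ζ : ℂ)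
    (Q : ℝ → ℝ → Matrix l m ℂ) (R : ℝ → ℝ → Matrix m l ℂ) :
    ℝ → ℝ → Matrix (l ⊕ m) (l ⊕ m) ℂ :=
  fun x t => Matrix.fromBlocks
    ((-(2 * Complex.I * ζ ^ 2)) • 1 - Complex.I • (Q x t * R x t))
    ((2 * ζ) • Q x t + Complex.I • pdx Q x t)
    ((2 * ζ) • R x t - Complex.I • pdx R x t)
    ((2 * Complex.I * ζ ^ 2) • 1 + Complex.I • (R x t * Q x t))

/-- `Ψ` is a linear eigenfunction of the Lax pair at `ζ`. -/
def IsLaxEigen {l m p : Type*} [Fintype l] [Fintype m] [DecidableEq l] [DecidableEq m] (ζ : ℂ)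
    (Q : ℝ → ℝ → Matrix l m ℂ) (R : ℝ → ℝ → Matrix m l ℂ)
    (Ψ : ℝ → ℝ → Matrix (l ⊕ m) p ℂ) : Prop :=
  (∀ x t : ℝ, pdx Ψ x t = LaxU ζ Q R x t * Ψ x t) ∧
  (∀ x t : ℝ, pdt Ψ x t = LaxV ζ Q R x t * Ψ x t)

/-- `Φ` is an adjoint linear eigenfunction of the Lax pair at `ζ`. -/
def IsAdjLaxEigen {l m p : Type*} [Fintype l] [Fintype m] [DecidableEq l] [DecidableEq m] (ζ : ℂ)
    (Q : ℝ → ℝ → Matrix l m ℂ) (R : ℝ → ℝ → Matrix m l ℂ)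
    (Φ : ℝ → ℝ → Matrix p (l ⊕ m) ℂ) : Prop :=
  (∀ x t : ℝ, pdx Φ x t = -(Φ x t * LaxU ζ Q R x t)) ∧
  (∀ x t : ℝ, pdt Φ x t = -(Φ x t * LaxV ζ Q R x t))

/-- The matrix derivative NLS system with parameter `ζ`. -/
def MatrixDNLS {l m : Type*} [Fintype l] [Fintype m] (ζ : ℂ)
    (Q : ℝ → ℝ → Matrix l m ℂ) (Rt : ℝ → ℝ → Matrix m l ℂ) : Prop :=
  (∀ x t : ℝ, Complex.I • pdt Q x t + pdx (pdx Q) x t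
      + (4 * Complex.I * ζ) • (Q x t * Rt x t * Q x t)
      - (2 : ℂ) • (Q x t * pdx Rt x t * Q x t)
      - (2 : ℂ) • (Q x t * Rt x t * Q x t * Rt x t * Q x t) = 0) ∧
  (∀ x t : ℝ, Complex.I • pdt Rt x t - pdx (pdx Rt) x t
      - (4 * Complex.I * ζ) • (Rt x t * Q x t * Rt x t)
      - (2 : ℂ) • (Rt x t * pdx Q x t * Rt x t)
      + (2 : ℂ) • (Rt x t * Q x t * Rt x t * Q x t * Rt x t) = 0)

/-! ### Auxiliary lemmas -/

/-- Entrywise joint smoothness at every point. -/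
def SmoothAtM {n p : Type*} (A : ℝ → ℝ → Matrix n p ℂ) : Prop :=
  ∀ (i : n) (j : p) (z : ℝ × ℝ), ContDiffAt ℝ (⊤ : ℕ∞) (fun q : ℝ × ℝ => A q.1 q.2 i j) z

lemma SmoothAtM.diffX {n p : Type*} {A : ℝ → ℝ → Matrix n p ℂ} (h : SmoothAtM A)
    (i : n) (j : p) (x t : ℝ) : DifferentiableAt ℝ (fun x' => A x' t i j) x := by
  have : (fun x' => A x' t i j) = (fun q : ℝ × ℝ => A q.1 q.2 i j) ∘ (fun x' => (x', t)) := rfl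
  rw [this]
  exact ((h i j (x, t)).comp x (contDiffAt_id.prodMk contDiffAt_const)).differentiableAt (by simp)

lemma SmoothAtM.diffT {n p : Type*} {A : ℝ → ℝ → Matrix n p ℂ} (h : SmoothAtM A)
    (i : n) (j : p) (x t : ℝ) : DifferentiableAt ℝ (fun t' => A x t' i j) t := by
  have : (fun t' => A x t' i j) = (fun q : ℝ × ℝ => A q.1 q.2 i j) ∘ (fun t' => (x, t')) := rfl
  rw [this]
  exact ((h i j (x, t)).comp t (contDiffAt_const.prodMk contDiffAt_id)).differentiableAt (by simp)

lemma SmoothAtM.mul {n p q : Type*} [Fintype p] {A : ℝ → ℝ → Matrix n p ℂ}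
    {B : ℝ → ℝ → Matrix p q ℂ} (hA : SmoothAtM A) (hB : SmoothAtM B) :
    SmoothAtM (fun x t => A x t * B x t) := by
  intro i j z
  simp only [Matrix.mul_apply]
  exact ContDiffAt.sum fun k _ => (hA i k z).mul (hB k j z)

lemma SmoothAtM.add' {n p : Type*} {A B : ℝ → ℝ → Matrix n p ℂ}
    (hA : SmoothAtM A) (hB : SmoothAtM B) : SmoothAtM (fun x t => A x t + B x t) := by
  intro i j z
  simp only [Matrix.add_apply]
  exact (hA i j z).add (hB i j z)

lemma SmoothAtM.smul' {n p : Type*} (c : ℂ) {A : ℝ → ℝ → Matrix n p ℂ}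
    (hA : SmoothAtM A) : SmoothAtM (fun x t => c • A x t) := by
  intro i j z
  simp only [Matrix.smul_apply, smul_eq_mul]
  exact contDiffAt_const.mul (hA i j z)

lemma contDiffAt_det' {k : ℕ} {A : ℝ × ℝ → Matrix (Fin k) (Fin k) ℂ} {z : ℝ × ℝ}
    (hA : ∀ i j, ContDiffAt ℝ (⊤ : ℕ∞) (fun q => A q i j) z) :
    ContDiffAt ℝ (⊤ : ℕ∞) (fun q => (A q).det) z := by
  simp only [Matrix.det_apply']
  exact ContDiffAt.sum fun σ _ => contDiffAt_const.mul (contDiffAt_prod fun i _ => hA (σ i) i)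

lemma contDiffAt_adjugate' {k : ℕ} {A : ℝ × ℝ → Matrix (Fin k) (Fin k) ℂ} {z : ℝ × ℝ}
    (hA : ∀ i j, ContDiffAt ℝ (⊤ : ℕ∞) (fun q => A q i j) z) (i j : Fin k) :
    ContDiffAt ℝ (⊤ : ℕ∞) (fun q => (A q).adjugate i j) z := by
  simp only [Matrix.adjugate_apply]
  apply contDiffAt_det'
  intro a b
  by_cases h : a = j
  · simp only [Matrix.updateRow_apply, h, if_pos rfl]
    exact contDiffAt_const
  · simp only [Matrix.updateRow_apply, if_neg h]
    exact hA a b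

lemma smoothAtM_inv {k : ℕ} {Ψ : ℝ → ℝ → Matrix (Fin k) (Fin k) ℂ}
    (h : SmoothAtM Ψ) (hinv : ∀ x t : ℝ, IsUnit (Ψ x t)) :
    SmoothAtM (fun x t => (Ψ x t)⁻¹) := by
  intro i j z
  have hd : ∀ a b, ContDiffAt ℝ (⊤ : ℕ∞) (fun q : ℝ × ℝ => Ψ q.1 q.2 a b) z := fun a b => h a b z
  have hdet := contDiffAt_det' (A := fun q : ℝ × ℝ => Ψ q.1 q.2) hd
  have hne : (Ψ z.1 z.2).det ≠ 0 :=
    ((Matrix.isUnit_iff_isUnit_det _).mp (hinv z.1 z.2)).ne_zero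
  have heq : (fun q : ℝ × ℝ => (Ψ q.1 q.2)⁻¹ i j)
      = fun q : ℝ × ℝ => ((Ψ q.1 q.2).det)⁻¹ * (Ψ q.1 q.2).adjugate i j := by
    funext q
    rw [Matrix.inv_def, Matrix.smul_apply, Ring.inverse_eq_inv', smul_eq_mul]
  rw [heq]
  exact (hdet.inv hne).mul (contDiffAt_adjugate' hd i j)

lemma pdx_mul {n p q : Type*} [Fintype p] {A : ℝ → ℝ → Matrix n p ℂ}
    {B : ℝ → ℝ → Matrix p q ℂ} (hA : SmoothAtM A) (hB : SmoothAtM B) (x t : ℝ) :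
    pdx (fun x t => A x t * B x t) x t = pdx A x t * B x t + A x t * pdx B x t := by
  ext i j
  simp only [pdx, Matrix.of_apply, Matrix.mul_apply, Matrix.add_apply]
  rw [deriv_fun_sum (A := fun k x' => A x' t i k * B x' t k j) fun k _ => ((hA.diffX i k x t).mul (hB.diffX k j x t)), ← Finset.sum_add_distrib]
  congr 1; funext k
  rw [deriv_fun_mul (hA.diffX i k x t) (hB.diffX k j x t)]

lemma pdt_mul {n p q : Type*} [Fintype p] {A : ℝ → ℝ → Matrix n p ℂ}
    {B : ℝ → ℝ → Matrix p q ℂ} (hA : SmoothAtM A) (hB : SmoothAtM B) (x t : ℝ) :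
    pdt (fun x t => A x t * B x t) x t = pdt A x t * B x t + A x t * pdt B x t := by
  ext i j
  simp only [pdt, Matrix.of_apply, Matrix.mul_apply, Matrix.add_apply]
  rw [deriv_fun_sum (A := fun k t' => A x t' i k * B x t' k j) fun k _ => ((hA.diffT i k x t).mul (hB.diffT k j x t)), ← Finset.sum_add_distrib]
  congr 1; funext k
  rw [deriv_fun_mul (hA.diffT i k x t) (hB.diffT k j x t)]

lemma pdx_add {n p : Type*} {A B : ℝ → ℝ → Matrix n p ℂ}
    (hA : SmoothAtM A) (hB : SmoothAtM B) (x t : ℝ) :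
    pdx (fun x t => A x t + B x t) x t = pdx A x t + pdx B x t := by
  ext i j
  simp only [pdx, Matrix.of_apply, Matrix.add_apply]
  exact deriv_add (hA.diffX i j x t) (hB.diffX i j x t)

lemma pdx_sub {n p : Type*} {A B : ℝ → ℝ → Matrix n p ℂ}
    (hA : SmoothAtM A) (hB : SmoothAtM B) (x t : ℝ) :
    pdx (fun x t => A x t - B x t) x t = pdx A x t - pdx B x t := by
  ext i j
  simp only [pdx, Matrix.of_apply, Matrix.sub_apply]
  exact deriv_sub (hA.diffX i j x t) (hB.diffX i j x t)

lemma pdx_smul {n p : Type*} (c : ℂ) (A : ℝ → ℝ → Matrix n p ℂ) (x t : ℝ) :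
    pdx (fun x t => c • A x t) x t = c • pdx A x t := by
  ext i j
  simp only [pdx, Matrix.of_apply, Matrix.smul_apply, smul_eq_mul]
  exact deriv_const_mul_field c

lemma pdx_const {n p : Type*} (M : Matrix n p ℂ) (x t : ℝ) :
    pdx (fun _ _ => M) x t = 0 := by
  ext i j
  simp [pdx]

lemma pdt_const {n p : Type*} (M : Matrix n p ℂ) (x t : ℝ) :
    pdt (fun _ _ => M) x t = 0 := by
  ext i j
  simp [pdt]

lemma mul_inv_cancel_left' {k : ℕ} {r : Type*} {A B : Matrix (Fin k) (Fin k) ℂ}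
    (h : A * B = 1) (Z : Matrix (Fin k) r ℂ) : A * (B * Z) = Z := by
  rw [← Matrix.mul_assoc, h, Matrix.one_mul]

lemma pdx_RcGQ {l m : ℕ} (c : ℂ) {R G : ℝ → ℝ → Matrix (Fin m) (Fin l) ℂ}
    {Q : ℝ → ℝ → Matrix (Fin l) (Fin m) ℂ}
    (hR : SmoothAtM R) (hG : SmoothAtM G) (hQ : SmoothAtM Q) (x t : ℝ) :
    pdx (fun x t => R x t + c • G x t - G x t * Q x t * G x t) x t
      = pdx R x t + c • pdx G x t
        - (pdx G x t * Q x t * G x t + G x t * pdx Q x t * G x t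
            + G x t * Q x t * pdx G x t) := by
  rw [pdx_sub (hR.add' (hG.smul' c)) ((hG.mul hQ).mul hG), pdx_add hR (hG.smul' c),
    pdx_smul, pdx_mul (hG.mul hQ) hG, pdx_mul hG hQ, Matrix.add_mul]

/-- if `(Q,R)` solves the matrix NLS system and `(Ψ₁,Ψ₂)` is a linear
eigenfunction at `ζ` with `Ψ₁` invertible everywhere, then `(Q, R̃)` with
`R̃ := Ψ₂ Ψ₁⁻¹` solves the matrix derivative NLS system with parameter `ζ`. -/
theorem matrixNLS_to_matrixDNLS {l m : ℕ} (ζ : ℂ)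
    (Q : ℝ → ℝ → Matrix (Fin l) (Fin m) ℂ) (R : ℝ → ℝ → Matrix (Fin m) (Fin l) ℂ)
    (hQ : SmoothM Q) (hR : SmoothM R) (hNLS : MatrixNLS Q R)
    (Ψ₁ : ℝ → ℝ → Matrix (Fin l) (Fin l) ℂ) (Ψ₂ : ℝ → ℝ → Matrix (Fin m) (Fin l) ℂ)
    (hΨ₁ : SmoothM Ψ₁) (hΨ₂ : SmoothM Ψ₂)
    (hinv : ∀ x t : ℝ, IsUnit (Ψ₁ x t))
    (hΨ : IsLaxEigen ζ Q R (fun x t => Matrix.fromRows (Ψ₁ x t) (Ψ₂ x t))) :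
    MatrixDNLS ζ Q (fun x t => Ψ₂ x t * (Ψ₁ x t)⁻¹) := by
  obtain ⟨hLx, hLt⟩ := hΨ
  have sQ : SmoothAtM Q := fun i j z => (hQ i j).contDiffAt
  have sR : SmoothAtM R := fun i j z => (hR i j).contDiffAt
  have s1 : SmoothAtM Ψ₁ := fun i j z => (hΨ₁ i j).contDiffAt
  have s2 : SmoothAtM Ψ₂ := fun i j z => (hΨ₂ i j).contDiffAt
  have sP : SmoothAtM (fun x t => (Ψ₁ x t)⁻¹) := smoothAtM_inv s1 hinv
  have sRt : SmoothAtM (fun x t => Ψ₂ x t * (Ψ₁ x t)⁻¹) := s2.mul sP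
  have hdet : ∀ x t : ℝ, IsUnit (Ψ₁ x t).det :=
    fun x t => (Matrix.isUnit_iff_isUnit_det _).mp (hinv x t)
  have hP1 : ∀ x t : ℝ, Ψ₁ x t * (Ψ₁ x t)⁻¹ = 1 :=
    fun x t => Matrix.mul_nonsing_inv _ (hdet x t)
  have hP2 : ∀ x t : ℝ, (Ψ₁ x t)⁻¹ * Ψ₁ x t = 1 :=
    fun x t => Matrix.nonsing_inv_mul _ (hdet x t)
  -- block extraction from the Lax pair
  have hfrx : ∀ x t : ℝ, pdx (fun x t => Matrix.fromRows (Ψ₁ x t) (Ψ₂ x t)) x t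
      = Matrix.fromRows (pdx Ψ₁ x t) (pdx Ψ₂ x t) := by
    intro x t; ext i j; cases i <;> rfl
  have hfrt : ∀ x t : ℝ, pdt (fun x t => Matrix.fromRows (Ψ₁ x t) (Ψ₂ x t)) x t
      = Matrix.fromRows (pdt Ψ₁ x t) (pdt Ψ₂ x t) := by
    intro x t; ext i j; cases i <;> rfl
  have hx12 : ∀ x t : ℝ,
      pdx Ψ₁ x t = (-(Complex.I * ζ)) • (1 : Matrix (Fin l) (Fin l) ℂ) * Ψ₁ x t
        + Q x t * Ψ₂ x t
      ∧ pdx Ψ₂ x t = R x t * Ψ₁ x t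
        + (Complex.I * ζ) • (1 : Matrix (Fin m) (Fin m) ℂ) * Ψ₂ x t := by
    intro x t
    have h := hLx x t
    rw [hfrx x t] at h
    simp only [LaxU, Matrix.fromBlocks_mul_fromRows] at h
    exact ⟨congrArg Matrix.toRows₁ h, congrArg Matrix.toRows₂ h⟩
  have hx1 : ∀ x t : ℝ, pdx Ψ₁ x t = (-(Complex.I * ζ)) • Ψ₁ x t + Q x t * Ψ₂ x t := by
    intro x t
    rw [(hx12 x t).1, Matrix.smul_mul, Matrix.one_mul]
  have hx2 : ∀ x t : ℝ, pdx Ψ₂ x t = R x t * Ψ₁ x t + (Complex.I * ζ) • Ψ₂ x t := by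
    intro x t
    rw [(hx12 x t).2, Matrix.smul_mul, Matrix.one_mul]
  have ht12 : ∀ x t : ℝ,
      pdt Ψ₁ x t = ((-(2 * Complex.I * ζ ^ 2)) • (1 : Matrix (Fin l) (Fin l) ℂ)
          - Complex.I • (Q x t * R x t)) * Ψ₁ x t
        + ((2 * ζ) • Q x t + Complex.I • pdx Q x t) * Ψ₂ x t
      ∧ pdt Ψ₂ x t = ((2 * ζ) • R x t - Complex.I • pdx R x t) * Ψ₁ x t
        + ((2 * Complex.I * ζ ^ 2) • (1 : Matrix (Fin m) (Fin m) ℂ)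
          + Complex.I • (R x t * Q x t)) * Ψ₂ x t := by
    intro x t
    have h := hLt x t
    rw [hfrt x t] at h
    simp only [LaxV, Matrix.fromBlocks_mul_fromRows] at h
    exact ⟨congrArg Matrix.toRows₁ h, congrArg Matrix.toRows₂ h⟩
  -- derivative of the inverse
  have hPx : ∀ x t : ℝ, pdx (fun x t => (Ψ₁ x t)⁻¹) x t
      = -((Ψ₁ x t)⁻¹ * (pdx Ψ₁ x t * (Ψ₁ x t)⁻¹)) := by
    intro x t
    have h0 : pdx (fun x t => Ψ₁ x t * (Ψ₁ x t)⁻¹) x t = 0 := by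
      have hc : (fun x t : ℝ => Ψ₁ x t * (Ψ₁ x t)⁻¹)
          = fun _ _ => (1 : Matrix (Fin l) (Fin l) ℂ) := by
        funext x t; exact hP1 x t
      rw [hc, pdx_const]
    rw [pdx_mul s1 sP x t] at h0
    have h2 : (Ψ₁ x t)⁻¹ * (pdx Ψ₁ x t * (Ψ₁ x t)⁻¹)
        + (Ψ₁ x t)⁻¹ * (Ψ₁ x t * pdx (fun x t => (Ψ₁ x t)⁻¹) x t) = 0 := by
      rw [← Matrix.mul_add, h0, Matrix.mul_zero]
    rw [mul_inv_cancel_left' (hP2 x t)] at h2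
    exact (neg_eq_of_add_eq_zero_right h2).symm
  have hPt : ∀ x t : ℝ, pdt (fun x t => (Ψ₁ x t)⁻¹) x t
      = -((Ψ₁ x t)⁻¹ * (pdt Ψ₁ x t * (Ψ₁ x t)⁻¹)) := by
    intro x t
    have h0 : pdt (fun x t => Ψ₁ x t * (Ψ₁ x t)⁻¹) x t = 0 := by
      have hc : (fun x t : ℝ => Ψ₁ x t * (Ψ₁ x t)⁻¹)
          = fun _ _ => (1 : Matrix (Fin l) (Fin l) ℂ) := by
        funext x t; exact hP1 x t
      rw [hc, pdt_const]
    rw [pdt_mul s1 sP x t] at h0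
    have h2 : (Ψ₁ x t)⁻¹ * (pdt Ψ₁ x t * (Ψ₁ x t)⁻¹)
        + (Ψ₁ x t)⁻¹ * (Ψ₁ x t * pdt (fun x t => (Ψ₁ x t)⁻¹) x t) = 0 := by
      rw [← Matrix.mul_add, h0, Matrix.mul_zero]
    rw [mul_inv_cancel_left' (hP2 x t)] at h2
    exact (neg_eq_of_add_eq_zero_right h2).symm
  -- spatial derivative of R̃
  have hRx : ∀ x t : ℝ, pdx (fun x t => Ψ₂ x t * (Ψ₁ x t)⁻¹) x t
      = R x t + (2 * (Complex.I * ζ)) • (Ψ₂ x t * (Ψ₁ x t)⁻¹)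
        - Ψ₂ x t * (Ψ₁ x t)⁻¹ * Q x t * (Ψ₂ x t * (Ψ₁ x t)⁻¹) := by
    intro x t
    rw [pdx_mul s2 sP x t, hPx x t, hx2 x t, hx1 x t]
    simp only [Matrix.add_mul, Matrix.sub_mul, Matrix.mul_add, Matrix.mul_sub,
      Matrix.smul_mul, Matrix.mul_smul, Matrix.mul_neg, Matrix.neg_mul, Matrix.mul_assoc,
      hP1 x t, Matrix.mul_one, Matrix.one_mul,
      mul_inv_cancel_left' (hP1 x t), mul_inv_cancel_left' (hP2 x t)]
    module
  -- temporal derivative of R̃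
  have hRt : ∀ x t : ℝ, pdt (fun x t => Ψ₂ x t * (Ψ₁ x t)⁻¹) x t
      = (2 * ζ) • R x t - Complex.I • pdx R x t
        + (4 * (Complex.I * ζ ^ 2)) • (Ψ₂ x t * (Ψ₁ x t)⁻¹)
        + Complex.I • (R x t * (Q x t * (Ψ₂ x t * (Ψ₁ x t)⁻¹)))
        + Complex.I • (Ψ₂ x t * (Ψ₁ x t)⁻¹ * (Q x t * R x t))
        - (2 * ζ) • (Ψ₂ x t * (Ψ₁ x t)⁻¹ * (Q x t * (Ψ₂ x t * (Ψ₁ x t)⁻¹)))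
        - Complex.I • (Ψ₂ x t * (Ψ₁ x t)⁻¹ * (pdx Q x t * (Ψ₂ x t * (Ψ₁ x t)⁻¹))) := by
    intro x t
    rw [pdt_mul s2 sP x t, hPt x t, (ht12 x t).1, (ht12 x t).2]
    simp only [Matrix.add_mul, Matrix.sub_mul, Matrix.mul_add, Matrix.mul_sub,
      Matrix.smul_mul, Matrix.mul_smul, Matrix.mul_neg, Matrix.neg_mul, Matrix.mul_assoc,
      hP1 x t, Matrix.mul_one, Matrix.one_mul,
      mul_inv_cancel_left' (hP1 x t), mul_inv_cancel_left' (hP2 x t)]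
    module
  -- second spatial derivative of R̃
  have hRxfun : pdx (fun x t => Ψ₂ x t * (Ψ₁ x t)⁻¹)
      = fun x t => R x t + (2 * (Complex.I * ζ)) • (Ψ₂ x t * (Ψ₁ x t)⁻¹)
        - Ψ₂ x t * (Ψ₁ x t)⁻¹ * Q x t * (Ψ₂ x t * (Ψ₁ x t)⁻¹) :=
    funext fun x => funext fun t => hRx x t
  have hRxx : ∀ x t : ℝ, pdx (pdx (fun x t => Ψ₂ x t * (Ψ₁ x t)⁻¹)) x t
      = pdx R x t
        + (2 * (Complex.I * ζ)) • (R x t + (2 * (Complex.I * ζ)) • (Ψ₂ x t * (Ψ₁ x t)⁻¹)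
            - Ψ₂ x t * (Ψ₁ x t)⁻¹ * Q x t * (Ψ₂ x t * (Ψ₁ x t)⁻¹))
        - ((R x t + (2 * (Complex.I * ζ)) • (Ψ₂ x t * (Ψ₁ x t)⁻¹)
              - Ψ₂ x t * (Ψ₁ x t)⁻¹ * Q x t * (Ψ₂ x t * (Ψ₁ x t)⁻¹)) * Q x t
                * (Ψ₂ x t * (Ψ₁ x t)⁻¹)
            + Ψ₂ x t * (Ψ₁ x t)⁻¹ * pdx Q x t * (Ψ₂ x t * (Ψ₁ x t)⁻¹)
            + Ψ₂ x t * (Ψ₁ x t)⁻¹ * Q x t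
                * (R x t + (2 * (Complex.I * ζ)) • (Ψ₂ x t * (Ψ₁ x t)⁻¹)
                  - Ψ₂ x t * (Ψ₁ x t)⁻¹ * Q x t * (Ψ₂ x t * (Ψ₁ x t)⁻¹))) := by
    intro x t
    rw [hRxfun, pdx_RcGQ (2 * (Complex.I * ζ)) sR sRt sQ x t, hRx x t]
  constructor
  · intro x t
    have hN := hNLS.1 x t
    rw [sub_eq_zero] at hN
    have hQt : Complex.I • pdt Q x t
        = (2 : ℂ) • (Q x t * R x t * Q x t) - pdx (pdx Q) x t := eq_sub_of_add_eq hN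
    simp only []
    rw [hRx x t, hQt]
    simp only [Matrix.mul_add, Matrix.add_mul, Matrix.mul_sub, Matrix.sub_mul,
      Matrix.mul_smul, Matrix.smul_mul, Matrix.mul_assoc]
    match_scalars <;>
      first
        | ring1
        | (simp only [Complex.I_sq]; ring1)
        | (ring_nf; simp only [Complex.I_sq]; ring1)
  · intro x t
    simp only []
    rw [hRt x t, hRxx x t]
    simp only [Matrix.mul_add, Matrix.add_mul, Matrix.mul_sub, Matrix.sub_mul,
      Matrix.mul_smul, Matrix.smul_mul, Matrix.mul_assoc]
    match_scalars <;>
      first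
        | ring1
        | (simp only [Complex.I_sq]; ring1)
        | (ring_nf; simp only [Complex.I_sq]; ring1)
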